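/- arXiv:2104.09658 — 6 statements merged into one kernel-verified Lean document; each statement's English description precedes it below -/
import Mathlib

section
/- Let H be a set of real-valued functions on a space X, γ > 0, and suppose that for every x ∈ X there exists f ∈ H with inf_{x': ‖x-x'‖≤γ} f(x') > 0 and there exists f ∈ H with sup_{x': ‖x-x'‖≤γ} f(x') < 0. Then for every x ∈ X and every η ∈ [0,1], the minimal inner adversarial risk inf_{f∈H} [η·ℓ_γ(f,x,+1) + (1−η)·ℓ_γ(f,x,−1)] equals min{η, 1−η}. -/
/-- The adversarial 0/1 loss with radius γ. -/
noncomputable def advLoss {d : ℕ} (γ : ℝ) (f : EuclideanSpace ℝ (Fin d) → ℝ)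
    (x : EuclideanSpace ℝ (Fin d)) (y : ℝ) : ℝ :=
  sSup ((fun x' => if y * f x' ≤ 0 then (1:ℝ) else 0) '' {x' | ‖x - x'‖ ≤ γ})

section aux

variable {d : ℕ} {γ : ℝ} {f : EuclideanSpace ℝ (Fin d) → ℝ}
  {x : EuclideanSpace ℝ (Fin d)} {y : ℝ}

lemma aux_self_mem (hγ : 0 < γ) : x ∈ {x' : EuclideanSpace ℝ (Fin d) | ‖x - x'‖ ≤ γ} := by
  simpa using hγ.le

lemma aux_bddAbove :
    BddAbove ((fun x' => if y * f x' ≤ 0 then (1:ℝ) else 0) '' {x' | ‖x - x'‖ ≤ γ}) := by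
  refine ⟨1, ?_⟩
  rintro a ⟨x', -, rfl⟩
  dsimp only
  split <;> norm_num

lemma advLoss_eq_one (h : ∃ x', ‖x - x'‖ ≤ γ ∧ y * f x' ≤ 0) :
    advLoss γ f x y = 1 := by
  obtain ⟨x', hx', hfx'⟩ := h
  refine le_antisymm (csSup_le ⟨_, ⟨x', hx', rfl⟩⟩ ?_) ?_
  · rintro a ⟨z, -, rfl⟩; dsimp only; split <;> norm_num
  · have : (1:ℝ) ∈ (fun x' => if y * f x' ≤ 0 then (1:ℝ) else 0) '' {x' | ‖x - x'‖ ≤ γ} :=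
      ⟨x', hx', by simp [hfx']⟩
    exact le_csSup aux_bddAbove this

lemma advLoss_eq_zero (hγ : 0 < γ) (h : ∀ x', ‖x - x'‖ ≤ γ → 0 < y * f x') :
    advLoss γ f x y = 0 := by
  have himg : (fun x' => if y * f x' ≤ 0 then (1:ℝ) else 0) '' {x' | ‖x - x'‖ ≤ γ} = {0} := by
    ext a
    constructor
    · rintro ⟨x', hx', rfl⟩
      simp [not_le.mpr (h x' hx')]
    · rintro rfl
      exact ⟨x, aux_self_mem hγ, by simp [not_le.mpr (h x (aux_self_mem hγ))]⟩
  rw [advLoss, himg, csSup_singleton]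

lemma advLoss_nonneg (hγ : 0 < γ) : 0 ≤ advLoss γ f x y := by
  have hm : (if y * f x ≤ 0 then (1:ℝ) else 0) ∈
      (fun x' => if y * f x' ≤ 0 then (1:ℝ) else 0) '' {x' | ‖x - x'‖ ≤ γ} :=
    ⟨x, aux_self_mem hγ, rfl⟩
  have h1 : (0:ℝ) ≤ (if y * f x ≤ 0 then (1:ℝ) else 0) := by split <;> norm_num
  exact h1.trans (le_csSup aux_bddAbove hm)

end aux

/-- If H contains, around every point, a function strictly positive on the γ-ball
and one strictly negative on the γ-ball, the minimal inner adversarial risk is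
min{η, 1−η}. -/
theorem stmt2 {d : ℕ} (γ : ℝ) (hγ : 0 < γ) (H : Set (EuclideanSpace ℝ (Fin d) → ℝ))
    (hpos : ∀ x : EuclideanSpace ℝ (Fin d),
      ∃ f ∈ H, 0 < sInf (f '' {x' | ‖x - x'‖ ≤ γ}))
    (hneg : ∀ x : EuclideanSpace ℝ (Fin d),
      ∃ f ∈ H, sSup (f '' {x' | ‖x - x'‖ ≤ γ}) < 0)
    (x : EuclideanSpace ℝ (Fin d)) (η : ℝ) (hη : η ∈ Set.Icc (0:ℝ) 1) :
    sInf ((fun f => η * advLoss γ f x 1 + (1 - η) * advLoss γ f x (-1)) '' H) =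
      min η (1 - η) := by
  obtain ⟨hη0, hη1⟩ := hη
  set R := fun f => η * advLoss γ f x 1 + (1 - η) * advLoss γ f x (-1) with hR
  -- η is achieved by a negative function
  have hmemη : η ∈ R '' H := by
    obtain ⟨f, hf, hfneg⟩ := hneg x
    have hbdd : BddAbove (f '' {x' | ‖x - x'‖ ≤ γ}) := by
      by_contra hb
      rw [Real.sSup_of_not_bddAbove hb] at hfneg
      exact lt_irrefl _ hfneg
    have hfx : ∀ x', ‖x - x'‖ ≤ γ → f x' < 0 := fun x' hx' =>
      lt_of_le_of_lt (le_csSup hbdd ⟨x', hx', rfl⟩) hfneg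
    refine ⟨f, hf, ?_⟩
    have h1 : advLoss γ f x 1 = 1 :=
      advLoss_eq_one ⟨x, aux_self_mem hγ, by simpa using (hfx x (aux_self_mem hγ)).le⟩
    have h2 : advLoss γ f x (-1) = 0 :=
      advLoss_eq_zero hγ (fun x' hx' => by nlinarith [hfx x' hx'])
    simp [hR, h1, h2]
  -- 1 - η is achieved by a positive function
  have hmem1η : (1 - η) ∈ R '' H := by
    obtain ⟨f, hf, hfpos⟩ := hpos x
    have hbdd : BddBelow (f '' {x' | ‖x - x'‖ ≤ γ}) := by
      by_contra hb
      rw [Real.sInf_of_not_bddBelow hb] at hfpos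
      exact lt_irrefl _ hfpos
    have hfx : ∀ x', ‖x - x'‖ ≤ γ → 0 < f x' := fun x' hx' =>
      lt_of_lt_of_le hfpos (csInf_le hbdd ⟨x', hx', rfl⟩)
    refine ⟨f, hf, ?_⟩
    have h1 : advLoss γ f x 1 = 0 :=
      advLoss_eq_zero hγ (fun x' hx' => by nlinarith [hfx x' hx'])
    have h2 : advLoss γ f x (-1) = 1 :=
      advLoss_eq_one ⟨x, aux_self_mem hγ, by nlinarith [hfx x (aux_self_mem hγ)]⟩
    simp [hR, h1, h2]
  -- lower bound
  have hlb : ∀ a ∈ R '' H, min η (1 - η) ≤ a := by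
    rintro a ⟨f, hf, rfl⟩
    rcases le_or_gt (f x) 0 with hfx | hfx
    · have h1 : advLoss γ f x 1 = 1 :=
        advLoss_eq_one ⟨x, aux_self_mem hγ, by simpa using hfx⟩
      have h2 : (0:ℝ) ≤ advLoss γ f x (-1) := advLoss_nonneg hγ
      have : min η (1 - η) ≤ η := min_le_left _ _
      simp only [hR, h1]
      nlinarith
    · have h1 : advLoss γ f x (-1) = 1 :=
        advLoss_eq_one ⟨x, aux_self_mem hγ, by nlinarith⟩
      have h2 : (0:ℝ) ≤ advLoss γ f x 1 := advLoss_nonneg hγ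
      have : min η (1 - η) ≤ 1 - η := min_le_right _ _
      simp only [hR, h1]
      nlinarith
  have hmemmin : min η (1 - η) ∈ R '' H := by
    rcases min_cases η (1 - η) with ⟨h, -⟩ | ⟨h, -⟩ <;> rw [h] <;> assumption
  exact le_antisymm (csInf_le ⟨min η (1 - η), hlb⟩ hmemmin)
    (le_csInf ⟨η, hmemη⟩ hlb)
end

section
/- Let φ : ℝ → ℝ≥0 be non-increasing and quasi-concave even. Then for every η ∈ (1/2, 1], the inner risk C_φ(t,η) = η φ(t) + (1−η) φ(−t) is non-increasing in t for t ≥ 0. Symmetrically, for every η ∈ [0, 1/2), C_φ(t,η) is non-decreasing in t for t ≤ 0. -/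
/-- For a non-increasing quasi-concave-even loss, the inner risk is non-increasing
on [0,∞) when η ∈ (1/2, 1], and non-decreasing on (−∞,0] when η ∈ [0, 1/2). -/
theorem stmt8 (φ : ℝ → ℝ) (hφ_nonneg : ∀ t, 0 ≤ φ t) (hφ_anti : Antitone φ)
    (hqc : QuasiconcaveOn ℝ Set.univ (fun t => φ t + φ (-t))) :
    (∀ η : ℝ, 1/2 < η → η ≤ 1 →
      AntitoneOn (fun t => η * φ t + (1 - η) * φ (-t)) (Set.Ici (0:ℝ))) ∧
    (∀ η : ℝ, 0 ≤ η → η < 1/2 →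
      MonotoneOn (fun t => η * φ t + (1 - η) * φ (-t)) (Set.Iic (0:ℝ))) := by
  set ψ : ℝ → ℝ := fun t => φ t + φ (-t) with hψ
  have hψ_anti : ∀ s t : ℝ, 0 ≤ s → s ≤ t → ψ t ≤ ψ s := by
    intro s t hs hst
    have hconv := hqc (ψ t)
    have hx : -t ∈ {x ∈ Set.univ | ψ t ≤ ψ x} := by
      simp [hψ, add_comm]
    have hy : t ∈ {x ∈ Set.univ | ψ t ≤ ψ x} := by simp
    have hseg := hconv.segment_subset hx hy
    have hmem : s ∈ segment ℝ (-t) t := by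
      rw [segment_eq_Icc (by linarith : (-t : ℝ) ≤ t)]
      exact ⟨by linarith, hst⟩
    exact (hseg hmem).2
  constructor
  · intro η hη1 hη2 x hx y hy hxy
    have h1 : ψ y ≤ ψ x := hψ_anti x y hx hxy
    have h2 : φ y ≤ φ x := hφ_anti hxy
    simp only [hψ] at h1
    simp only
    nlinarith
  · intro η hη1 hη2 x hx y hy hxy
    have h1 : ψ (-x) ≤ ψ (-y) := hψ_anti (-y) (-x) (by simpa using hy) (by linarith)
    have h2 : φ (-x) ≤ φ (-y) := hφ_anti (by linarith)
    simp only [hψ, neg_neg] at h1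
    simp only
    nlinarith
end

section
/- Let φ : ℝ → ℝ≥0 be continuous, non-increasing, and quasi-concave even, with φ(−c) > φ(c) for some c > 0 (taking c = G − g(−1)). Then for every η ∈ (1/2, 1], η φ(−c) + (1−η) φ(c) > η φ(c') + (1−η) φ(−c') whenever c' ≥ c ≥ 0; in particular C_φ(−c, η) > C_φ(c', η) for all η ∈ (1/2, 1]. -/
/-- For a continuous non-increasing quasi-concave-even loss with φ(−c) > φ(c),
the inner risk at −c strictly exceeds the inner risk at any c' ≥ c, for every
η ∈ (1/2, 1]. -/
theorem stmt15 (φ : ℝ → ℝ) (hnn : ∀ t, 0 ≤ φ t) (hcont : Continuous φ)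
    (hanti : Antitone φ)
    (hqc : QuasiconcaveOn ℝ Set.univ (fun t => φ t + φ (-t)))
    (c : ℝ) (hc0 : 0 ≤ c) (hasym : φ c < φ (-c))
    (η : ℝ) (hη1 : 1/2 < η) (hη2 : η ≤ 1)
    (c' : ℝ) (hcc' : c ≤ c') :
    η * φ c' + (1 - η) * φ (-c') < η * φ (-c) + (1 - η) * φ c := by
  have hc'0 : 0 ≤ c' := le_trans hc0 hcc'
  -- c lies in the segment [-c', c']
  have hmem : c ∈ segment ℝ (-c') c' := by
    rw [segment_eq_Icc (by linarith : -c' ≤ c')]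
    exact ⟨by linarith, hcc'⟩
  have hconv := hqc (φ c' + φ (-c'))
  have h1' : c' ∈ {x ∈ Set.univ | φ c' + φ (-c') ≤ φ x + φ (-x)} := by
    simp
  have h2' : -c' ∈ {x ∈ Set.univ | φ c' + φ (-c') ≤ φ x + φ (-x)} := by
    simp [neg_neg]; linarith
  have hS : φ c' + φ (-c') ≤ φ c + φ (-c) := by
    have := hconv.segment_subset h2' h1' hmem
    simpa using this.2
  have h2 : φ c' ≤ φ c := hanti hcc'
  have t1 := mul_le_mul_of_nonneg_left hS (by linarith : (0:ℝ) ≤ 1 - η)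
  have t2 := mul_le_mul_of_nonneg_left h2 (by linarith : (0:ℝ) ≤ 2*η - 1)
  have t3 := mul_lt_mul_of_pos_left hasym (by linarith : (0:ℝ) < 2*η - 1)
  nlinarith [t1, t2, t3]
end

section
/- Let φ : ℝ → ℝ≥0 be non-increasing with φ(−a) > φ(a) for reals 0 ≤ a ≤ b (a = G − g(−1), b = g(1) + G). Then for every η ∈ [0, 1/2), the inequality η φ(−a) + (1−η) φ(a) < η φ(b) + (1−η) φ(−b) holds if and only if φ(a) + φ(−a) = φ(b) + φ(−b), provided additionally that φ(t)+φ(−t) is non-increasing on [0,∞). -/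
/-- Part 7 of the lemma on quasi-concave even losses: for all η ∈ [0,1/2),
C_φ(−a, η) < C_φ(b, η) if and only if φ(a) + φ(−a) = φ(b) + φ(−b). -/
theorem stmt16 (φ : ℝ → ℝ) (hnn : ∀ t, 0 ≤ φ t) (hanti : Antitone φ)
    (a b : ℝ) (ha0 : 0 ≤ a) (hab : a ≤ b) (hasym : φ a < φ (-a))
    (hsum : ∀ s t : ℝ, 0 ≤ s → s ≤ t → φ t + φ (-t) ≤ φ s + φ (-s)) :
    (∀ η : ℝ, 0 ≤ η → η < 1/2 →
        η * φ (-a) + (1 - η) * φ a < η * φ b + (1 - η) * φ (-b)) ↔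
      φ a + φ (-a) = φ b + φ (-b) := by
  have hle := hsum a b ha0 hab
  constructor
  · intro h
    have h0 := h 0 le_rfl (by norm_num)
    have hc : φ a < φ (-b) := by linarith
    set k : ℝ := φ (-a) - φ b - φ a + φ (-b) with hk
    set c : ℝ := φ (-b) - φ a with hcdef
    have key : (1/2) * k ≤ c := by
      rcases le_or_gt k 0 with hk0 | hk0
      · nlinarith
      · by_contra hcon
        push_neg at hcon
        set η : ℝ := max 0 (c / k) with hη
        have hη0 : 0 ≤ η := le_max_left _ _
        have hη1 : η < 1/2 := by
          apply max_lt (by norm_num)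
          rw [div_lt_iff₀ hk0]; linarith
        have hlt := h η hη0 hη1
        have hge : c ≤ η * k := by
          have : c / k ≤ η := le_max_right _ _
          calc c = (c / k) * k := by field_simp
            _ ≤ η * k := by nlinarith
        nlinarith
    linarith
  · intro heq η hη0 hη1
    have hba : φ b ≤ φ a := hanti hab
    have hc : φ a < φ (-b) := by linarith
    nlinarith [mul_pos (show (0:ℝ) < φ (-b) - φ a by linarith)
      (show (0:ℝ) < 1 - 2*η by linarith)]
end

section
/- Let φ : ℝ → ℝ be continuous and let σ ∈ (0, π). Define g(t) = ∫_{−t}^{π−t} [(1/4) φ(cos θ) + (7/4) φ(−cos(θ+σ))] dθ. Then g is differentiable and g'(σ/2) = (3/2)[φ(−cos(σ/2)) − φ(cos(σ/2))]. Consequently, if t = σ/2 is a local minimizer of g, then φ(−cos(σ/2)) = φ(cos(σ/2)). -/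
open Real

theorem Continuous.hasDerivAt_intervalIntegral_of_hasDerivAt
    {E : Type*} [NormedAddCommGroup E] [NormedSpace ℝ E] [CompleteSpace E]
    {F : ℝ → E} (hF : Continuous F) {u v : ℝ → ℝ} {u' v' t : ℝ}
    (hu : HasDerivAt u u' t) (hv : HasDerivAt v v' t) :
    HasDerivAt (fun s => ∫ θ in u s..v s, F θ) (v' • F (v t) - u' • F (u t)) t := by
  have hprim : ∀ x, HasDerivAt (fun y => ∫ θ in (0 : ℝ)..y, F θ) (F x) x := fun x =>
    (hF.integral_hasStrictDerivAt 0 x).hasDerivAt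
  have hsplit : (fun s => ∫ θ in u s..v s, F θ) =
      fun s => (∫ θ in (0 : ℝ)..v s, F θ) - ∫ θ in (0 : ℝ)..u s, F θ := by
    funext s
    exact (intervalIntegral.integral_interval_sub_left
      (hF.intervalIntegrable _ _) (hF.intervalIntegrable _ _)).symm
  rw [hsplit]
  exact ((hprim (v t)).scomp t hv).sub ((hprim (u t)).scomp t hu)

theorem stmt17_general (φ : ℝ → ℝ) (hcont : Continuous φ) (σ : ℝ) :
    let g : ℝ → ℝ := fun t => ∫ θ in (-t)..(Real.pi - t),
      ((1/4) * φ (Real.cos θ) + (7/4) * φ (-Real.cos (θ + σ)))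
    HasDerivAt g ((3/2) * (φ (-Real.cos (σ/2)) - φ (Real.cos (σ/2)))) (σ/2) ∧
    (IsLocalMin g (σ/2) → φ (-Real.cos (σ/2)) = φ (Real.cos (σ/2))) := by
  intro g
  set F : ℝ → ℝ := fun θ => (1/4) * φ (cos θ) + (7/4) * φ (-cos (θ + σ))
  have hF : Continuous F := by fun_prop
  have hboundary : F (-(σ/2)) - F (π - σ/2) = (3/2) * (φ (-cos (σ/2)) - φ (cos (σ/2))) := by
    simp only [F, show -(σ/2) + σ = σ/2 by ring, show π - σ/2 + σ = σ/2 + π by ring,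
      cos_neg, cos_pi_sub, cos_add_pi, neg_neg]
    ring
  have hderiv : HasDerivAt g ((3/2) * (φ (-cos (σ/2)) - φ (cos (σ/2)))) (σ/2) := by
    refine (hF.hasDerivAt_intervalIntegral_of_hasDerivAt (hasDerivAt_neg (σ/2))
      ((hasDerivAt_id' (σ/2)).const_sub π)).congr_deriv ?_
    rw [← hboundary, neg_one_smul, neg_one_smul]
    ring
  exact ⟨hderiv, fun hmin => by linarith [hmin.hasDerivAt_eq_zero hderiv]⟩

/-- Derivative of the surrogate risk of the angle-t linear classifier for the
asymmetric circle distribution, and the induced first-order condition. -/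
theorem stmt17 (φ : ℝ → ℝ) (hcont : Continuous φ) (σ : ℝ)
    (hσ1 : 0 < σ) (hσ2 : σ < Real.pi) :
    let g : ℝ → ℝ := fun t => ∫ θ in (-t)..(Real.pi - t),
      ((1/4) * φ (Real.cos θ) + (7/4) * φ (-Real.cos (θ + σ)))
    HasDerivAt g ((3/2) * (φ (-Real.cos (σ/2)) - φ (Real.cos (σ/2)))) (σ/2) ∧
    (IsLocalMin g (σ/2) → φ (-Real.cos (σ/2)) = φ (Real.cos (σ/2))) :=
  stmt17_general φ hcont σ
end

section
/- Let σ ∈ (0, π) and γ = cos(σ/2) ∈ (0,1). Then min over t ∈ [0, 2π) of ∫_{−t}^{π−t} [(1/4)·1[cos θ ≤ γ] + (7/4)·1[−cos(θ+σ) ≤ γ]] dθ equals 2π − 2σ, and the minimum is attained at t = σ/2. -/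
/-!
Write `c = σ/2`, so `γ = cos c`. Over an interval of length `π` the integrand equals
`2 - (1/4)·1[cos θ > cos c] - (7/4)·1[cos (θ + σ - π) > cos c]`, so the integral is `2π` minus
the weighted lengths of the two superlevel sets inside the window. The set `{cos θ > cos c}` is a
union of arcs of length `2c = σ` spaced `2π` apart; since `c < π/2` the gaps exceed `π`, so a window
of length `π` meets at most one arc and each length is at most `σ`, giving `F t ≥ 2π - 2σ`. At
`t = σ/2` both windows contain a full arc, so equality holds.
-/
open MeasureTheory Real Set

lemma cos_lt_cos_iff_abs_lt {c x : ℝ} (hc0 : 0 ≤ c) (hcπ : c ≤ π) (hx : |x| ≤ π) :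
    cos c < cos x ↔ |x| < c := by
  rw [← cos_abs x]
  exact strictAntiOn_cos.lt_iff_gt ⟨hc0, hcπ⟩ ⟨abs_nonneg x, hx⟩

lemma cos_gt_inter_Ioc_eq_Ioo {c a b : ℝ} (hc0 : 0 ≤ c) (ha : -π ≤ a) (hac : a ≤ -c)
    (hcb : c ≤ b) (hb : b ≤ π) :
    {θ | cos c < cos θ} ∩ Ioc a b = Ioo (-c) c := by
  ext θ
  simp only [mem_inter_iff, mem_ofPred_eq, mem_Ioc, mem_Ioo]
  constructor
  · rintro ⟨hθ, haθ, hθb⟩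
    rw [cos_lt_cos_iff_abs_lt hc0 (by linarith) (abs_le.2 ⟨by linarith, by linarith⟩)] at hθ
    exact abs_lt.1 hθ
  · rintro ⟨hcθ, hθc⟩
    refine ⟨?_, by linarith, by linarith⟩
    rw [cos_lt_cos_iff_abs_lt hc0 (by linarith) (abs_le.2 ⟨by linarith, by linarith⟩)]
    exact abs_lt.2 ⟨hcθ, hθc⟩

/-- Away from `0`, the next arcs of `{cos x > cos c}` start at `±(2π - c)`, beyond `±3π/2`. -/
lemma abs_lt_of_cos_lt_cos {c x : ℝ} (hc0 : 0 ≤ c) (hc : c ≤ π / 2) (hx : |x| < 3 * π / 2)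
    (h : cos c < cos x) : |x| < c := by
  have hπ := pi_pos
  rcases le_or_gt |x| π with hxπ | hxπ
  · exact (cos_lt_cos_iff_abs_lt hc0 (by linarith) hxπ).1 h
  · rw [← cos_abs x, ← cos_two_pi_sub |x|,
      cos_lt_cos_iff_abs_lt hc0 (by linarith) (abs_le.2 ⟨by linarith, by linarith⟩)] at h
    linarith [le_abs_self (2 * π - |x|)]

lemma cos_gt_inter_Ioc_subset {c a b : ℝ} (hc0 : 0 ≤ c) (hc : c ≤ π / 2) (hab : b ≤ a + π) :
    ∃ k : ℤ, {θ | cos c < cos θ} ∩ Ioc a b ⊆ Ioo (k * (2 * π) - c) (k * (2 * π) + c) := by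
  have hπ := pi_pos
  -- `2πk ∈ (a - π/2, a + 3π/2]`, so `θ - 2πk ∈ (-3π/2, 3π/2)` for `θ ∈ (a, a + π]`
  set k := ⌊(a + 3 * π / 2) / (2 * π)⌋
  have hk₁ : k * (2 * π) ≤ a + 3 * π / 2 :=
    (le_div_iff₀ (by positivity)).1 (Int.floor_le _)
  have hk₂ : a + 3 * π / 2 < (k + 1) * (2 * π) :=
    (div_lt_iff₀ (by positivity)).1 (Int.lt_floor_add_one _)
  refine ⟨k, fun θ ⟨hθ, haθ, hθb⟩ => ?_⟩
  rw [mem_ofPred_eq, ← cos_sub_int_mul_two_pi θ k] at hθ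
  have := abs_lt.1 (abs_lt_of_cos_lt_cos hc0 hc (abs_lt.2 ⟨by linarith, by linarith⟩) hθ)
  exact ⟨by linarith, by linarith⟩

lemma volume_real_cos_gt_inter_Ioc_le {c a b : ℝ} (hc0 : 0 ≤ c) (hc : c ≤ π / 2)
    (hab : b ≤ a + π) :
    volume.real ({θ | cos c < cos θ} ∩ Ioc a b) ≤ 2 * c := by
  obtain ⟨k, hk⟩ := cos_gt_inter_Ioc_subset hc0 hc hab
  calc volume.real ({θ | cos c < cos θ} ∩ Ioc a b)
      ≤ volume.real (Ioo (k * (2 * π) - c) (k * (2 * π) + c)) :=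
        measureReal_mono hk measure_Ioo_lt_top.ne
    _ = 2 * c := by rw [volume_real_Ioo_of_le (by linarith)]; ring

lemma ite_le_eq_one_sub_indicator (p : ℝ → ℝ) (γ θ : ℝ) :
    (if p θ ≤ γ then (1 : ℝ) else 0) = 1 - {θ | γ < p θ}.indicator 1 θ := by
  by_cases h : p θ ≤ γ <;> simp [indicator, h, not_lt.2, not_le.1]

lemma intervalIntegrable_indicator_one {S : Set ℝ} (hS : MeasurableSet S) (a b : ℝ) :
    IntervalIntegrable (S.indicator (1 : ℝ → ℝ)) volume a b :=
  ⟨(intervalIntegrable_const (c := (1 : ℝ))).1.indicator hS,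
    (intervalIntegrable_const (c := (1 : ℝ))).2.indicator hS⟩

lemma intervalIntegrable_ite_le {p : ℝ → ℝ} (hp : Measurable p) (γ a b : ℝ) :
    IntervalIntegrable (fun θ => if p θ ≤ γ then (1 : ℝ) else 0) volume a b := by
  have hS : MeasurableSet {θ | γ < p θ} := measurableSet_lt measurable_const hp
  rw [funext (ite_le_eq_one_sub_indicator p γ)]
  exact intervalIntegrable_const.sub (intervalIntegrable_indicator_one hS a b)

lemma integral_ite_le_eq_sub_volume_real {p : ℝ → ℝ} (hp : Measurable p) (γ : ℝ) {a b : ℝ}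
    (hab : a ≤ b) :
    ∫ θ in a..b, (if p θ ≤ γ then (1 : ℝ) else 0)
      = (b - a) - volume.real ({θ | γ < p θ} ∩ Ioc a b) := by
  have hS : MeasurableSet {θ | γ < p θ} := measurableSet_lt measurable_const hp
  rw [funext (ite_le_eq_one_sub_indicator p γ), intervalIntegral.integral_sub
      intervalIntegrable_const (intervalIntegrable_indicator_one hS a b),
    intervalIntegral.integral_const, intervalIntegral.integral_of_le hab,
    integral_indicator_one hS, measureReal_restrict_apply hS, smul_eq_mul, mul_one]

lemma volume_real_neg_cos_add_gt_inter_Ioc (γ σ a b : ℝ) :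
    volume.real ({θ | γ < -cos (θ + σ)} ∩ Ioc a b)
      = volume.real ({θ | γ < cos θ} ∩ Ioc (a + (σ - π)) (b + (σ - π))) := by
  have hpre : {θ | γ < -cos (θ + σ)} ∩ Ioc a b
      = (· + (σ - π)) ⁻¹' ({θ | γ < cos θ} ∩ Ioc (a + (σ - π)) (b + (σ - π))) := by
    ext θ
    simp only [mem_inter_iff, mem_ofPred_eq, mem_Ioc, mem_preimage, add_lt_add_iff_right,
      add_le_add_iff_right, ← cos_sub_pi, add_sub_assoc]
  rw [hpre, Measure.real, measure_preimage_add_right, Measure.real]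

lemma integral_risk_eq_two_pi_sub (σ γ t : ℝ) :
    ∫ θ in (-t)..(π - t), ((1/4) * (if cos θ ≤ γ then (1:ℝ) else 0) +
       (7/4) * (if -cos (θ + σ) ≤ γ then (1:ℝ) else 0))
      = 2 * π - (1/4 * volume.real ({θ | γ < cos θ} ∩ Ioc (-t) (π - t))
        + 7/4 * volume.real ({θ | γ < cos θ} ∩ Ioc (-t + (σ - π)) (π - t + (σ - π)))) := by
  have hab : -t ≤ π - t := by linarith [pi_pos]
  have hcos : Measurable cos := continuous_cos.measurable
  have hshift : Measurable fun θ => -cos (θ + σ) := by fun_prop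
  rw [intervalIntegral.integral_add ((intervalIntegrable_ite_le hcos γ _ _).const_mul _)
      ((intervalIntegrable_ite_le hshift γ _ _).const_mul _),
    intervalIntegral.integral_const_mul, intervalIntegral.integral_const_mul,
    integral_ite_le_eq_sub_volume_real hcos γ hab, integral_ite_le_eq_sub_volume_real hshift γ hab,
    volume_real_neg_cos_add_gt_inter_Ioc]
  ring

/-- The adversarial 0/1 risk integral for the asymmetric circle distribution is
minimized over t ∈ [0, 2π) at t = σ/2, with minimal value 2π − 2σ. -/
theorem stmt18 (σ γ : ℝ) (hσ1 : 0 < σ) (hσ2 : σ < Real.pi)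
    (hγ : γ = Real.cos (σ/2)) :
    let F : ℝ → ℝ := fun t => ∫ θ in (-t)..(Real.pi - t),
      ((1/4) * (if Real.cos θ ≤ γ then (1:ℝ) else 0) +
       (7/4) * (if -Real.cos (θ + σ) ≤ γ then (1:ℝ) else 0))
    F (σ/2) = 2 * Real.pi - 2 * σ ∧
    ∀ t ∈ Set.Ico (0:ℝ) (2 * Real.pi), 2 * Real.pi - 2 * σ ≤ F t := by
  intro F
  subst hγ
  have hc0 : 0 ≤ σ / 2 := by linarith
  have hc : σ / 2 ≤ π / 2 := by linarith
  dsimp only [F]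
  refine ⟨?_, fun t _ => ?_⟩
  · rw [integral_risk_eq_two_pi_sub,
      cos_gt_inter_Ioc_eq_Ioo hc0 (by linarith) le_rfl (by linarith) (by linarith),
      cos_gt_inter_Ioc_eq_Ioo hc0 (by linarith) (by linarith) (by linarith) (by linarith),
      volume_real_Ioo_of_le (by linarith)]
    ring
  · rw [integral_risk_eq_two_pi_sub]
    linarith [volume_real_cos_gt_inter_Ioc_le hc0 hc (a := -t) (b := π - t) (by linarith),
      volume_real_cos_gt_inter_Ioc_le hc0 hc (a := -t + (σ - π)) (b := π - t + (σ - π))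
        (by linarith)]
end
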